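/- The space of global sections of the vector activation sheaf on a finite link complex has dimension equal to the number of nodes (i.e., H^0 of the vector activation sheaf has dimension |N|), provided every vertex of X appears in some cell. -/

import Mathlib

/-- A finite abstract simplicial complex. -/
def IsComplex {N : Type*} (X : Finset (Finset N)) : Prop :=
  ∀ c ∈ X, c.Nonempty ∧ ∀ b : Finset N, b ⊆ c → b.Nonempty → b ∈ X

/-- `m` is a basis element of the stalk of the vector activation sheaf at `c`:
it shares a coface with `c`. -/
def InStalk {N : Type*} (X : Finset (Finset N)) (c : Finset N) (m : N) : Prop :=
  ∃ d ∈ X, c ⊆ d ∧ m ∈ d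

/-- A global section of the vector activation sheaf, encoded as a function giving the
coefficient of each basis node at each cell: it vanishes off `X`, it is supported on
the stalk's basis, and it is compatible with the restriction maps, which send a basis
node `m` to `m` when `m` is in the basis at the larger cell and to `0` otherwise. -/
def IsVSection {N : Type*} (k : Type*) [Field k]
    (X : Finset (Finset N)) (g : Finset N → N → k) : Prop :=
  (∀ c, c ∉ X → ∀ m, g c m = 0) ∧
  (∀ c ∈ X, ∀ m, ¬ InStalk X c m → g c m = 0) ∧
  (∀ c ∈ X, ∀ d ∈ X, c ⊆ d → ∀ m, InStalk X d m → g d m = g c m) ∧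
  (∀ c ∈ X, ∀ d ∈ X, c ⊆ d → ∀ m, ¬ InStalk X d m → g d m = 0)

/-- The space of global sections `H⁰` of the vector activation sheaf. -/
def secSpace {N : Type*} (k : Type*) [Field k] (X : Finset (Finset N)) :
    Submodule k (Finset N → N → k) where
  carrier := {g | IsVSection k X g}
  zero_mem' := ⟨fun _ _ _ => rfl, fun _ _ _ _ => rfl,
    fun _ _ _ _ _ _ _ => rfl, fun _ _ _ _ _ _ _ => rfl⟩
  add_mem' := fun {a b} ha hb =>
    ⟨fun c hc m => by simp [ha.1 c hc m, hb.1 c hc m],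
     fun c hc m hm => by simp [ha.2.1 c hc m hm, hb.2.1 c hc m hm],
     fun c hc d hd hcd m hm => by
       simp [ha.2.2.1 c hc d hd hcd m hm, hb.2.2.1 c hc d hd hcd m hm],
     fun c hc d hd hcd m hm => by
       simp [ha.2.2.2 c hc d hd hcd m hm, hb.2.2.2 c hc d hd hcd m hm]⟩
  smul_mem' := fun r a ha =>
    ⟨fun c hc m => by simp [ha.1 c hc m],
     fun c hc m hm => by simp [ha.2.1 c hc m hm],
     fun c hc d hd hcd m hm => by simp [ha.2.2.1 c hc d hd hcd m hm],
     fun c hc d hd hcd m hm => by simp [ha.2.2.2 c hc d hd hcd m hm]⟩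

/-
If `m` is in the stalk at `c`, a coface `d ⊇ c ∪ {m}` links both `c` and the vertex `{m}` to `d`
by restriction maps that fix `m`, so `g c m = g d m = g {m} m`. Hence a section is determined by
its vertex values `g {m} m`, and any family of vertex values extends to the section equal to
`f m` wherever `m` is in the stalk: `H⁰ ≅ kᴺ`.
-/

section

variable {N : Type*} {k : Type*} [Field k] {X : Finset (Finset N)}

theorem InStalk.mono {c d : Finset N} {m : N} (hcd : c ⊆ d) (h : InStalk X d m) :
    InStalk X c m :=
  let ⟨e, he, hde, hme⟩ := h
  ⟨e, he, hcd.trans hde, hme⟩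

theorem inStalk_singleton_self {m : N} (hm : {m} ∈ X) : InStalk X {m} m :=
  ⟨{m}, hm, subset_rfl, Finset.mem_singleton_self m⟩

theorem IsVSection.apply_eq_apply_singleton {g : Finset N → N → k} (hg : IsVSection k X g)
    (hvert : ∀ n : N, ({n} : Finset N) ∈ X) {c : Finset N} (hc : c ∈ X) {m : N}
    (hm : InStalk X c m) : g c m = g {m} m := by
  obtain ⟨d, hd, hcd, hmd⟩ := hm
  have hdm : InStalk X d m := ⟨d, hd, subset_rfl, hmd⟩
  rw [← hg.2.2.1 c hc d hd hcd m hdm,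
    hg.2.2.1 {m} (hvert m) d hd (Finset.singleton_subset_iff.mpr hmd) m hdm]

theorem IsVSection.ext {g h : Finset N → N → k} (hg : IsVSection k X g) (hh : IsVSection k X h)
    (hvert : ∀ n : N, ({n} : Finset N) ∈ X) (hgh : ∀ n, g {n} n = h {n} n) : g = h := by
  funext c m
  by_cases hc : c ∈ X
  · by_cases hm : InStalk X c m
    · rw [hg.apply_eq_apply_singleton hvert hc hm, hh.apply_eq_apply_singleton hvert hc hm, hgh]
    · rw [hg.2.1 c hc m hm, hh.2.1 c hc m hm]
  · rw [hg.1 c hc m, hh.1 c hc m]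

open Classical in
noncomputable def sectionOfVertexValues (X : Finset (Finset N)) (f : N → k) :
    Finset N → N → k :=
  fun c m => if c ∈ X ∧ InStalk X c m then f m else 0

theorem isVSection_sectionOfVertexValues (f : N → k) :
    IsVSection k X (sectionOfVertexValues X f) := by
  classical
  refine ⟨fun c hc m => by simp [sectionOfVertexValues, hc],
    fun c _ m hm => by simp [sectionOfVertexValues, hm], ?_,
    fun c _ d _ _ m hm => by simp [sectionOfVertexValues, hm]⟩
  intro c hc d hd hcd m hm
  simp [sectionOfVertexValues, hc, hd, hm, hm.mono hcd]

theorem sectionOfVertexValues_singleton (hvert : ∀ n : N, ({n} : Finset N) ∈ X) (f : N → k)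
    (n : N) : sectionOfVertexValues X f {n} n = f n := by
  classical
  simp [sectionOfVertexValues, hvert n, inStalk_singleton_self (hvert n)]

variable (k X) in
noncomputable def secSpaceEquivVertexValues (hvert : ∀ n : N, ({n} : Finset N) ∈ X) :
    secSpace k X ≃ₗ[k] (N → k) where
  toFun g n := g.1 {n} n
  map_add' _ _ := rfl
  map_smul' _ _ := rfl
  invFun f := ⟨sectionOfVertexValues X f, isVSection_sectionOfVertexValues f⟩
  left_inv g := Subtype.ext <|
    (isVSection_sectionOfVertexValues _).ext g.2 hvert (sectionOfVertexValues_singleton hvert _)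
  right_inv f := funext (sectionOfVertexValues_singleton hvert f)

end

theorem dim_H0_vector_activation_sheaf_general {N : Type*} [Fintype N]
    (k : Type*) [Field k] (X : Finset (Finset N))
    (hvert : ∀ n : N, ({n} : Finset N) ∈ X) :
    Module.finrank k (secSpace k X) = Fintype.card N := by
  rw [(secSpaceEquivVertexValues k X hvert).finrank_eq, Module.finrank_fintype_fun_eq_card]

/-- The space of global sections of the vector activation sheaf on a finite link
complex, every node being a vertex, has dimension equal to the number of nodes. -/
theorem dim_H0_vector_activation_sheaf {N : Type*} [Fintype N] [DecidableEq N]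
    (k : Type*) [Field k] (X : Finset (Finset N)) (hX : IsComplex X)
    (hvert : ∀ n : N, ({n} : Finset N) ∈ X) :
    Module.finrank k (secSpace k X) = Fintype.card N :=
  dim_H0_vector_activation_sheaf_general k X hvert
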